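/- Let X be a compact metric space with compatible metric ρ satisfying ρ < 1. The function d_F on X × [0,1] defined by d_F((x,s),(y,t)) = 2|s−t| + (1 − max{s,t})·ρ(x,y) is a pseudometric, and d_F((x,s),(y,t)) = 0 if and only if (x,s) = (y,t) or s = t = 1. -/
import Mathlib


open unitInterval

/-- The canonical fan metric `d_F((x,s),(y,t)) = 2|s−t| + (1 − max{s,t})·ρ(x,y)`. -/
noncomputable def fanDist {X : Type*} [MetricSpace X] (p q : X × unitInterval) : ℝ :=
  2 * |(p.2 : ℝ) - (q.2 : ℝ)| + (1 - max (p.2 : ℝ) (q.2 : ℝ)) * dist p.1 q.1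

lemma fan_tri (a b c dxy dyz dxz : ℝ)
    (hd : dxz ≤ dxy + dyz) (h0 : 0 ≤ dxy) (h1 : dxy ≤ 1) (h0' : 0 ≤ dyz) (h1' : dyz ≤ 1)
    (h0'' : 0 ≤ dxz) (ha : a ≤ 1) (hb : b ≤ 1) (hc : c ≤ 1) :
    2 * |a - c| + (1 - max a c) * dxz ≤
      (2 * |a - b| + (1 - max a b) * dxy) + (2 * |b - c| + (1 - max b c) * dyz) := by
  set M := max a c with hM
  set M1 := max a b with hM1
  set M2 := max b c with hM2
  have hMle : M ≤ 1 := max_le ha hc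
  have e1 : (1 - M) * dxz ≤ (1 - M) * dxy + (1 - M) * dyz := by nlinarith
  have e2 : (1 - M) * dxy ≤ (1 - M1) * dxy + max (M1 - M) 0 := by
    rcases le_total M1 M with h | h
    · rw [max_eq_right (by linarith)]; nlinarith
    · rw [max_eq_left (by linarith)]; nlinarith
  have e3 : (1 - M) * dyz ≤ (1 - M2) * dyz + max (M2 - M) 0 := by
    rcases le_total M2 M with h | h
    · rw [max_eq_right (by linarith)]; nlinarith
    · rw [max_eq_left (by linarith)]; nlinarith
  have e4 : 2 * |a - c| + max (M1 - M) 0 + max (M2 - M) 0 ≤ 2 * |a - b| + 2 * |b - c| := by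
    rcases le_total b M with h | h
    · have h1' : M1 ≤ M := max_le (le_max_left a c) h
      have h2' : M2 ≤ M := max_le h (le_max_right a c)
      rw [max_eq_right (by linarith), max_eq_right (by linarith)]
      have habs : |a - c| ≤ |a - b| + |b - c| := by
        calc |a - c| = |(a - b) + (b - c)| := by ring_nf
          _ ≤ |a - b| + |b - c| := abs_add_le _ _
      linarith
    · have hab : a ≤ b := le_trans (le_max_left a c) h
      have hcb : c ≤ b := le_trans (le_max_right a c) h
      have h1' : M1 = b := max_eq_right hab
      have h2' : M2 = b := max_eq_left hcb
      rw [h1', h2', max_eq_left (by linarith : (0:ℝ) ≤ b - M)]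
      rw [abs_of_nonpos (by linarith : a - b ≤ 0), abs_of_nonneg (by linarith : b - c ≥ 0)]
      rcases le_total a c with h' | h'
      · have hMv : M = c := hM.trans (max_eq_right h')
        rw [hMv, abs_of_nonpos (by linarith : a - c ≤ 0)]; linarith
      · have hMv : M = a := hM.trans (max_eq_left h')
        rw [hMv, abs_of_nonneg (by linarith : a - c ≥ 0)]; linarith
  linarith

/-- `d_F` is a pseudometric on `X × [0,1]` (for a metric `ρ < 1`), and it vanishes
exactly on pairs that are equal or both have second coordinate `1`. -/
theorem fanDist_pseudometric_and_eq_zero_iff {X : Type*} [MetricSpace X]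
    (hρ : ∀ x y : X, dist x y < 1) :
    (∀ p : X × unitInterval, fanDist p p = 0) ∧
    (∀ p q : X × unitInterval, fanDist p q = fanDist q p) ∧
    (∀ p q r : X × unitInterval, fanDist p r ≤ fanDist p q + fanDist q r) ∧
    (∀ p q : X × unitInterval, fanDist p q = 0 ↔ p = q ∨ (p.2 = 1 ∧ q.2 = 1)) := by
  refine ⟨?_, ?_, ?_, ?_⟩
  · intro p; simp [fanDist]
  · intro p q; simp [fanDist, abs_sub_comm, max_comm, dist_comm]
  · intro p q r
    simp only [fanDist]
    exact fan_tri _ _ _ _ _ _ (dist_triangle p.1 q.1 r.1) dist_nonneg (hρ _ _).le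
      dist_nonneg (hρ _ _).le dist_nonneg p.2.2.2 q.2.2.2 r.2.2.2
  · intro p q
    constructor
    · intro h
      have habs : |(p.2 : ℝ) - (q.2 : ℝ)| = 0 ∧ (1 - max (p.2 : ℝ) (q.2 : ℝ)) * dist p.1 q.1 = 0 := by
        have h1 : (0:ℝ) ≤ |(p.2 : ℝ) - (q.2 : ℝ)| := abs_nonneg _
        have hM : max (p.2 : ℝ) (q.2 : ℝ) ≤ 1 := max_le p.2.2.2 q.2.2.2
        have h2 : (0:ℝ) ≤ (1 - max (p.2 : ℝ) (q.2 : ℝ)) * dist p.1 q.1 :=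
          mul_nonneg (by linarith) dist_nonneg
        constructor <;> [skip; skip] <;> simp only [fanDist] at h <;> linarith
      obtain ⟨h1, h2⟩ := habs
      have hst : (p.2 : ℝ) = (q.2 : ℝ) := by
        have := abs_eq_zero.mp h1; linarith
      rcases mul_eq_zero.mp h2 with h3 | h3
      · right
        have hmax : max (p.2 : ℝ) (q.2 : ℝ) = 1 := by linarith
        have : (p.2 : ℝ) = 1 := by rw [hst] at hmax ⊢; simpa using hmax
        exact ⟨Subtype.ext this, Subtype.ext (by rw [← hst]; exact this)⟩
      · left
        have hx : p.1 = q.1 := dist_eq_zero.mp h3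
        exact Prod.ext hx (Subtype.ext hst)
    · rintro (rfl | ⟨h1, h2⟩)
      · simp [fanDist]
      · simp [fanDist, h1, h2]
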